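/- arXiv:1306.1690 — 6 statements merged into one kernel-verified Lean document; each statement's English description precedes it below -/
import Mathlib

section
/- Let f : [0,∞) → [0, 1/2] be a continuous function such that f(t) → 0 as t → ∞, and such that for every a > 0 there exists t(a) ≥ 0 with f(t(a)) ≥ 2^(−a·t(a)). Then for each natural number n ≥ 1 there exists T_n ≥ n such that f(t) ≤ 2·f(T_n) for all t ∈ [T_n − n, ∞). -/
/-!
If the conclusion failed for some `n`, every `t ≥ n` would be beaten by a factor two somewhere
in `[t - n, ∞)`. Applied at `t` itself, this halves the bound `f ≤ 1/2` on each step of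
length `n`, so `f t < 2 ^ (-t/n)` for all `t ≥ 0`, contradicting non-exponential decay at the
rate `a = 1/n`.
-/

lemma le_div_two_pow_of_forall_exists_two_mul_lt {f : ℝ → ℝ} {L C : ℝ} (hL : 0 ≤ L)
    (hC : ∀ t, 0 ≤ t → f t ≤ C) (hstep : ∀ t, L ≤ t → ∃ u, t - L ≤ u ∧ 2 * f t < f u) :
    ∀ (k : ℕ) (t : ℝ), k * L ≤ t → f t ≤ C / 2 ^ k := by
  intro k
  induction k with
  | zero => intro t ht; simpa using hC t (by simpa using ht)
  | succ k ih =>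
    intro t ht
    push_cast at ht
    obtain ⟨u, hu, hfu⟩ := hstep t (by nlinarith [k.cast_nonneg (α := ℝ)])
    have hfu_le : f u ≤ C / 2 ^ k := ih u (by linarith)
    rw [pow_succ, ← div_div]
    linarith

lemma one_div_two_pow_floor_succ_lt (x : ℝ) : 1 / (2 : ℝ) ^ (⌊x⌋₊ + 1) < (2 : ℝ) ^ (-x) := by
  rw [one_div, ← Real.rpow_natCast, ← Real.rpow_neg zero_le_two,
    Real.rpow_lt_rpow_left_iff one_lt_two, neg_lt_neg_iff]
  exact_mod_cast Nat.lt_floor_add_one x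

theorem shiffman_assertion_exp_general (f : ℝ → ℝ)
    (hrange : ∀ t ∈ Set.Ici (0:ℝ), f t ∈ Set.Icc (0:ℝ) (1/2))
    (hnotexp : ∀ a : ℝ, 0 < a → ∃ t : ℝ, 0 ≤ t ∧ (2:ℝ) ^ (-(a * t)) ≤ f t) :
    ∀ n : ℕ, 1 ≤ n → ∃ T : ℝ, (n : ℝ) ≤ T ∧ ∀ t : ℝ, T - n ≤ t → f t ≤ 2 * f T := by
  intro n hn
  by_contra! hcon
  have hn_pos : (0 : ℝ) < n := by exact_mod_cast hn
  obtain ⟨t, ht, hft⟩ := hnotexp (1 / n) (by positivity)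
  have hdecay : f t ≤ 1 / 2 / 2 ^ ⌊t / n⌋₊ :=
    le_div_two_pow_of_forall_exists_two_mul_lt hn_pos.le (fun t ht ↦ (hrange t ht).2) hcon _ t
      ((le_div_iff₀ hn_pos).1 (Nat.floor_le (div_nonneg ht hn_pos.le)))
  have hsmall := one_div_two_pow_floor_succ_lt (t / n)
  rw [div_div, ← pow_succ'] at hdecay
  rw [one_div_mul_eq_div] at hft
  linarith

/-- A continuous function `f : [0,∞) → [0,1/2]` tending to zero at
infinity that does not decay exponentially (for every rate `a > 0` it exceeds
`2^(-a t)` somewhere) admits, for each `n ≥ 1`, a point `T_n ≥ n` such that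
`f(t) ≤ 2 f(T_n)` for all `t ∈ [T_n - n, ∞)`. -/
theorem shiffman_assertion_exp (f : ℝ → ℝ)
    (hcont : ContinuousOn f (Set.Ici 0))
    (hrange : ∀ t ∈ Set.Ici (0:ℝ), f t ∈ Set.Icc (0:ℝ) (1/2))
    (hlim : Filter.Tendsto f Filter.atTop (nhds 0))
    (hnotexp : ∀ a : ℝ, 0 < a → ∃ t : ℝ, 0 ≤ t ∧ (2:ℝ) ^ (-(a * t)) ≤ f t) :
    ∀ n : ℕ, 1 ≤ n → ∃ T : ℝ, (n : ℝ) ≤ T ∧ ∀ t : ℝ, T - n ≤ t → f t ≤ 2 * f T :=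
  shiffman_assertion_exp_general f hrange hnotexp
end

section
/- Let u and y be smooth complex-valued (or real-valued) functions of two variables (z,t) on an open set, with y nowhere vanishing, satisfying the Schrödinger equation y'' + u·y = 0 (prime denoting ∂/∂z) and the evolution equation ∂y/∂t = u'·y − 2u·y'. Then u satisfies the KdV equation ∂u/∂t = −u''' − 6·u·u'. -/
/-!
Differentiate the Schrödinger equation `y'' = -u y` in `t` and compare with the second
`z`-derivative of the evolution equation; the mixed partials commute. Using `y'' = -u y` and
`y''' = -u' y - u y'` on both sides, every term involving `y'` cancels and what is left is
`(u̇ + u''' + 6 u u') y = 0`, so `y ≠ 0` gives KdV.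
-/

open Function

section TwoVariables

variable {𝕜 : Type*} [NontriviallyNormedField 𝕜] {E : Type*} [NormedAddCommGroup E]
  [NormedSpace 𝕜 E]

theorem ContDiff.of_uncurry_left {f : 𝕜 → 𝕜 → E} {n : WithTop ℕ∞}
    (hf : ContDiff 𝕜 n (uncurry f)) (t : 𝕜) : ContDiff 𝕜 n (f t) :=
  hf.comp (contDiff_const.prodMk contDiff_id)

theorem ContDiff.of_uncurry_right {f : 𝕜 → 𝕜 → E} {n : WithTop ℕ∞}
    (hf : ContDiff 𝕜 n (uncurry f)) (z : 𝕜) : ContDiff 𝕜 n (fun s => f s z) :=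
  hf.comp (contDiff_id.prodMk contDiff_const)

theorem hasDerivAt_fst_of_differentiableAt {G : 𝕜 × 𝕜 → E} {t z : 𝕜}
    (hG : DifferentiableAt 𝕜 G (t, z)) :
    HasDerivAt (fun s => G (s, z)) (fderiv 𝕜 G (t, z) (1, 0)) t :=
  hG.hasFDerivAt.comp_hasDerivAt t ((hasDerivAt_id t).prodMk (hasDerivAt_const t z))

theorem hasDerivAt_snd_of_differentiableAt {G : 𝕜 × 𝕜 → E} {t z : 𝕜}
    (hG : DifferentiableAt 𝕜 G (t, z)) :
    HasDerivAt (fun w => G (t, w)) (fderiv 𝕜 G (t, z) (0, 1)) z :=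
  hG.hasFDerivAt.comp_hasDerivAt z ((hasDerivAt_const z t).prodMk (hasDerivAt_id z))

theorem contDiff_uncurry_deriv {f : 𝕜 → 𝕜 → E} {m n : WithTop ℕ∞}
    (hf : ContDiff 𝕜 m (uncurry f)) (hnm : n + 1 ≤ m) :
    ContDiff 𝕜 n (uncurry fun s => deriv (f s)) :=
  (ContDiff.fderiv (f := fun p : 𝕜 × 𝕜 => f p.1)
    (hf.comp (contDiff_fst.fst.prodMk contDiff_snd)) contDiff_snd hnm).clm_apply contDiff_const

theorem deriv_fst_deriv_snd_eq_fderiv_fderiv {f : 𝕜 → 𝕜 → E} (hf : ContDiff 𝕜 2 (uncurry f))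
    (t z : 𝕜) :
    deriv (fun s => deriv (f s) z) t = fderiv 𝕜 (fderiv 𝕜 (uncurry f)) (t, z) (1, 0) (0, 1) := by
  have hF : Differentiable 𝕜 (fderiv 𝕜 (uncurry f)) :=
    (hf.fderiv_right (m := 1) le_rfl).differentiable one_ne_zero
  have hpartial : (fun s => deriv (f s) z) = fun s => fderiv 𝕜 (uncurry f) (s, z) (0, 1) :=
    funext fun s => (hasDerivAt_snd_of_differentiableAt
      (hf.differentiable two_ne_zero (s, z))).deriv
  rw [hpartial, (hasDerivAt_fst_of_differentiableAt
    ((hF (t, z)).clm_apply (differentiableAt_const _))).deriv,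
    fderiv_clm_apply (hF (t, z)) (differentiableAt_const _)]
  simp

theorem deriv_snd_deriv_fst_eq_fderiv_fderiv {f : 𝕜 → 𝕜 → E} (hf : ContDiff 𝕜 2 (uncurry f))
    (t z : 𝕜) :
    deriv (fun w => deriv (fun s => f s w) t) z =
      fderiv 𝕜 (fderiv 𝕜 (uncurry f)) (t, z) (0, 1) (1, 0) := by
  have hF : Differentiable 𝕜 (fderiv 𝕜 (uncurry f)) :=
    (hf.fderiv_right (m := 1) le_rfl).differentiable one_ne_zero
  have hpartial :
      (fun w => deriv (fun s => f s w) t) = fun w => fderiv 𝕜 (uncurry f) (t, w) (1, 0) :=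
    funext fun w => (hasDerivAt_fst_of_differentiableAt
      (hf.differentiable two_ne_zero (t, w))).deriv
  rw [hpartial, (hasDerivAt_snd_of_differentiableAt
    ((hF (t, z)).clm_apply (differentiableAt_const _))).deriv,
    fderiv_clm_apply (hF (t, z)) (differentiableAt_const _)]
  simp

end TwoVariables

section Symmetry

variable {𝕜 : Type*} [RCLike 𝕜] {E : Type*} [NormedAddCommGroup E] [NormedSpace 𝕜 E]

theorem deriv_deriv_comm {f : 𝕜 → 𝕜 → E} (hf : ContDiff 𝕜 2 (uncurry f)) (t z : 𝕜) :
    deriv (fun s => deriv (f s) z) t = deriv (fun w => deriv (fun s => f s w) t) z := by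
  rw [deriv_fst_deriv_snd_eq_fderiv_fderiv hf, deriv_snd_deriv_fst_eq_fderiv_fderiv hf]
  exact hf.contDiffAt.isSymmSndFDerivAt (by simp) _ _

theorem deriv_deriv_deriv_comm {f : 𝕜 → 𝕜 → E} (hf : ContDiff 𝕜 3 (uncurry f)) (t z : 𝕜) :
    deriv (fun s => deriv (deriv (f s)) z) t =
      deriv (deriv (fun w => deriv (fun s => f s w) t)) z := by
  have hinner : (fun w => deriv (fun s => deriv (f s) w) t) =
      deriv (fun w => deriv (fun s => f s w) t) :=
    funext (deriv_deriv_comm (hf.of_le (by norm_num)) t)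
  rw [← hinner]
  exact deriv_deriv_comm (f := fun s => deriv (f s)) (contDiff_uncurry_deriv hf le_rfl) t z

end Symmetry

section Schrodinger

variable {𝕜 : Type*} [NontriviallyNormedField 𝕜]

theorem deriv_deriv_evolution_of_schrodinger {a b : 𝕜 → 𝕜} (ha : ContDiff 𝕜 3 a)
    (hb : ContDiff 𝕜 2 b) (hschr : ∀ w, deriv (deriv b) w + a w * b w = 0) (z : 𝕜) :
    deriv (deriv fun w => deriv a w * b w - 2 * a w * deriv b w) z =
      deriv (deriv (deriv a)) z * b z + 5 * a z * deriv a z * b z +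
        2 * a z ^ 2 * deriv b z := by
  have ha₁ : ContDiff 𝕜 2 (deriv a) := ha.deriv'
  have ha₂ : ContDiff 𝕜 1 (deriv (deriv a)) := ha₁.deriv'
  have hb₁ : ContDiff 𝕜 1 (deriv b) := hb.deriv'
  have da : ∀ w, HasDerivAt a (deriv a w) w := fun w =>
    (ha.differentiable (by simp) w).hasDerivAt
  have da₁ : ∀ w, HasDerivAt (deriv a) (deriv (deriv a) w) w := fun w =>
    (ha₁.differentiable (by simp) w).hasDerivAt
  have da₂ : ∀ w, HasDerivAt (deriv (deriv a)) (deriv (deriv (deriv a)) w) w := fun w =>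
    (ha₂.differentiable one_ne_zero w).hasDerivAt
  have db : ∀ w, HasDerivAt b (deriv b w) w := fun w =>
    (hb.differentiable (by simp) w).hasDerivAt
  have db₁ : ∀ w, HasDerivAt (deriv b) (-(a w * b w)) w := fun w => by
    rw [← eq_neg_of_add_eq_zero_left (hschr w)]
    exact (hb₁.differentiable one_ne_zero w).hasDerivAt
  have hW : deriv (fun w => deriv a w * b w - 2 * a w * deriv b w) =
      fun w => deriv (deriv a) w * b w - deriv a w * deriv b w + 2 * a w ^ 2 * b w := by
    funext w
    exact (((da₁ w).mul (db w)).sub (((da w).const_mul 2).mul (db₁ w))).deriv.trans (by ring)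
  rw [hW]
  exact ((((da₂ z).mul (db z)).sub ((da₁ z).mul (db₁ z))).add
    ((((da z).fun_pow 2).const_mul 2).mul (db z))).deriv.trans (by ring)

end Schrodinger

/-- If `y(z,t)` is nowhere vanishing and satisfies the Schrödinger
equation `y'' + u y = 0` (primes = ∂/∂z) together with the evolution equation
`∂y/∂t = u' y − 2 u y'`, then the potential `u` satisfies the KdV equation
`∂u/∂t = −u''' − 6 u u'`.  Here `u t z` and `y t z` denote the values at time
`t` and space variable `z`, and both are jointly smooth (holomorphic in the
pair of variables). -/
theorem kdv_compatibility (u y : ℂ → ℂ → ℂ)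
    (hu : ContDiff ℂ ⊤ (fun p : ℂ × ℂ => u p.1 p.2))
    (hy : ContDiff ℂ ⊤ (fun p : ℂ × ℂ => y p.1 p.2))
    (hynz : ∀ t z, y t z ≠ 0)
    (hschr : ∀ t z, deriv (deriv (y t)) z + u t z * y t z = 0)
    (hevol : ∀ t z, deriv (fun s => y s z) t =
      deriv (u t) z * y t z - 2 * u t z * deriv (y t) z) :
    ∀ t z, deriv (fun s => u s z) t =
      -(deriv (deriv (deriv (u t))) z) - 6 * u t z * deriv (u t) z := by
  intro t z
  have hU : ContDiff ℂ 3 (uncurry u) := hu.of_le le_top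
  have hY : ContDiff ℂ 3 (uncurry y) := hy.of_le le_top
  have du : HasDerivAt (fun s => u s z) (deriv (fun s => u s z) t) t :=
    ((hU.of_uncurry_right z).differentiable (by simp) t).hasDerivAt
  have dy : HasDerivAt (fun s => y s z) (deriv (fun s => y s z) t) t :=
    ((hY.of_uncurry_right z).differentiable (by simp) t).hasDerivAt
  have htime : deriv (fun s => deriv (deriv (y s)) z) t =
      -(deriv (fun s => u s z) t * y t z + u t z * deriv (fun s => y s z) t) := by
    rw [funext fun s => eq_neg_of_add_eq_zero_left (hschr s z)]
    exact (du.mul dy).neg.deriv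
  have hspace : deriv (fun s => deriv (deriv (y s)) z) t =
      deriv (deriv (deriv (u t))) z * y t z + 5 * u t z * deriv (u t) z * y t z +
        2 * u t z ^ 2 * deriv (y t) z := by
    rw [deriv_deriv_deriv_comm hY, funext (hevol t)]
    exact deriv_deriv_evolution_of_schrodinger (hU.of_uncurry_left t)
      ((hY.of_uncurry_left t).of_le (by norm_num)) (hschr t) z
  have hkdv : (deriv (fun s => u s z) t + deriv (deriv (deriv (u t))) z +
      6 * u t z * deriv (u t) z) * y t z = 0 := by
    linear_combination htime - hspace - u t z * hevol t z
  linear_combination (mul_eq_zero.mp hkdv).resolve_right (hynz t z)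
end

section
/- Let g and h be complex differentiable functions on an open subset of ℂ with g and g' nowhere vanishing. Then the derivative of the function g·h'/(2g') + h equals (1/g²) times the derivative of g³·h'/(2g'). Equivalently, setting ġ = (g³h'/(2g'))', one has (gh'/(2g') + h)' = ġ/g² and trivially (g³h'/(2g'))' = ġ. -/
/-!
Write `F = h' / (2 g')`, so that `2 g' F = h'`. Then
`(g³ F)' - g² (g F + h)' = 3 g² g' F + g³ F' - g² (g' F + g F' + h') = g² (2 g' F - h') = 0`.
-/

section

variable {𝕜 𝔸 : Type*} [NontriviallyNormedField 𝕜] [NormedCommRing 𝔸] [NormedAlgebra 𝕜 𝔸]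
  {g h F : 𝕜 → 𝔸} {z : 𝕜}

theorem deriv_cube_mul_eq_sq_mul_deriv_mul_add (hg : DifferentiableAt 𝕜 g z)
    (hh : DifferentiableAt 𝕜 h z) (hF : DifferentiableAt 𝕜 F z)
    (hgF : 2 * deriv g z * F z = deriv h z) :
    deriv (fun w => g w ^ 3 * F w) z = g z ^ 2 * deriv (fun w => g w * F w + h w) z := by
  rw [deriv_fun_mul (hg.fun_pow 3) hF, deriv_fun_pow hg, deriv_fun_add (hg.fun_mul hF) hh,
    deriv_fun_mul hg hF, ← hgF]
  ring

end

/-- For holomorphic `g, h` on an open set `U ⊆ ℂ` with `g` and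
`g'` nowhere vanishing, setting `ġ = (g³h'/(2g'))'` one has
`(g h'/(2g') + h)' = ġ/g²`; i.e. the derivative of `g h'/(2g') + h` equals
`1/g²` times the derivative of `g³ h'/(2g')`. -/
theorem shiffman_primitives (U : Set ℂ) (hU : IsOpen U) (g h : ℂ → ℂ)
    (hg : DifferentiableOn ℂ g U) (hh : DifferentiableOn ℂ h U)
    (hgnz : ∀ z ∈ U, g z ≠ 0) (hg'nz : ∀ z ∈ U, deriv g z ≠ 0) :
    ∀ z ∈ U,
      deriv (fun w => g w * deriv h w / (2 * deriv g w) + h w) z =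
        deriv (fun w => (g w) ^ 3 * deriv h w / (2 * deriv g w)) z / (g z) ^ 2 := by
  intro z hz
  have hUz : U ∈ nhds z := hU.mem_nhds hz
  have h2g' : 2 * deriv g z ≠ 0 := mul_ne_zero two_ne_zero (hg'nz z hz)
  have hF : DifferentiableAt ℂ (fun w => deriv h w / (2 * deriv g w)) z :=
    ((hh.deriv hU).differentiableAt hUz).div
      (((hg.deriv hU).differentiableAt hUz).const_mul 2) h2g'
  simp only [mul_div_assoc]
  rw [deriv_cube_mul_eq_sq_mul_deriv_mul_add (hg.differentiableAt hUz)
      (hh.differentiableAt hUz) hF (mul_div_cancel₀ _ h2g'),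
    mul_div_cancel_left₀ _ (pow_ne_zero 2 (hgnz z hz))]
end

section
/- Let g be holomorphic on a neighborhood of 0 in ℂ with g(0) = g'(0) = 0, g''(0) ≠ 0, and g'''(0) = 0, so that g(z) = a·z² + z⁴·f₁(z) with a = g''(0)/2 ≠ 0 and f₁ holomorphic. Then the function u = −(3/4)·(g')²/g² + (1/2)·g''/g, which is meromorphic near 0, has Laurent expansion u(z) = −2/z² + b + z²·f₂(z) for some constant b and some holomorphic function f₂ near 0; in particular u has an order-two pole at 0 with leading coefficient −2 and zero residue, and moreover the coefficient of z in the expansion vanishes. -/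
/-!
By Taylor's theorem `g = a z² + z⁴ c` with `a = g''(0)/2` and `c` analytic. Then
`g'/g = 2/z + z μ` with `μ = (2c + z c')/(a + z² c)` analytic at `0`, and the Miura potential
becomes `u = -2/z² - (μ - z μ')/2 - z² μ²/4`. The function `μ - z μ'` has derivative `-z μ''`,
which vanishes at `0`, so it is `μ(0) + z² F`; hence `u = -2/z² - μ(0)/2 + z²(…)`.
-/

open Topology

section Taylor

variable {𝕜 : Type*} [NontriviallyNormedField 𝕜] [CharZero 𝕜]
  {E : Type*} [NormedAddCommGroup E] [NormedSpace 𝕜 E] [CompleteSpace E]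

theorem AnalyticAt.exists_eq_sq_smul_add_pow_four_smul {g : 𝕜 → E} (hg : AnalyticAt 𝕜 g 0)
    (h0 : g 0 = 0) (h1 : deriv g 0 = 0) (h3 : deriv (deriv (deriv g)) 0 = 0) :
    ∃ c : 𝕜 → E, AnalyticAt 𝕜 c 0 ∧
      ∀ z, g z = (z ^ 2 / 2) • deriv (deriv g) 0 + z ^ 4 • c z := by
  obtain ⟨c, hc, hgc⟩ := hg.exists_eq_sum_add_pow_mul 4
  refine ⟨c, hc, fun z => ?_⟩
  simp [hgc z, Finset.sum_range_succ, iteratedDeriv_succ, h0, h1, h3]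

theorem AnalyticAt.exists_sub_smul_deriv_eq_add_sq_smul {μ : 𝕜 → E} (hμ : AnalyticAt 𝕜 μ 0) :
    ∃ F : 𝕜 → E, AnalyticAt 𝕜 F 0 ∧ ∀ z, μ z - z • deriv μ z = μ 0 + z ^ 2 • F z := by
  set ψ : 𝕜 → E := fun z => μ z - z • deriv μ z
  have hψ : AnalyticAt 𝕜 ψ 0 := hμ.sub (analyticAt_id.smul hμ.deriv)
  have hψ' : deriv ψ 0 = 0 := by
    have := hμ.differentiableAt.hasDerivAt.fun_sub
      ((hasDerivAt_id' (0 : 𝕜)).fun_smul hμ.deriv.differentiableAt.hasDerivAt)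
    simpa using this.deriv
  obtain ⟨F, hF, hψF⟩ := hψ.exists_eq_sum_add_pow_mul 2
  refine ⟨F, hF, fun z => ?_⟩
  simpa [Finset.sum_range_succ, hψ', ψ] using hψF z

end Taylor

section MiuraPotential

variable {𝕜 : Type*} [NontriviallyNormedField 𝕜] [CharZero 𝕜] [CompleteSpace 𝕜]

noncomputable def miuraPotential (g : 𝕜 → 𝕜) (z : 𝕜) : 𝕜 :=
  -(3 / 4) * deriv g z ^ 2 / g z ^ 2 + (1 / 2) * deriv (deriv g) z / g z

theorem miuraPotential_mul_sq_add_pow_four_mul_eq {c μ : 𝕜 → 𝕜} {a : 𝕜} (ha : a ≠ 0)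
    (hc : AnalyticAt 𝕜 c 0)
    (hμ : μ = fun z => (2 * c z + z * deriv c z) / (a + z ^ 2 * c z)) :
    ∀ᶠ z in 𝓝[≠] 0, miuraPotential (fun z => a * z ^ 2 + z ^ 4 * c z) z
      = -2 / z ^ 2 - (μ z - z * deriv μ z) / 2 - z ^ 2 * μ z ^ 2 / 4 := by
  subst hμ
  have hH : ∀ᶠ z in 𝓝 0, a + z ^ 2 * c z ≠ 0 :=
    (continuousAt_const.add ((continuousAt_id.pow 2).mul hc.continuousAt)).eventually_ne
      (by simpa)
  have hg' : ∀ w, AnalyticAt 𝕜 c w → HasDerivAt (fun z => a * z ^ 2 + z ^ 4 * c z)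
      (2 * a * w + 4 * w ^ 3 * c w + w ^ 4 * deriv c w) w := fun w hw => by
    refine (((hasDerivAt_pow 2 w).const_mul a).fun_add
      ((hasDerivAt_pow 4 w).fun_mul hw.differentiableAt.hasDerivAt)).congr_deriv ?_
    push_cast
    ring
  filter_upwards [nhdsWithin_le_nhds hc.eventually_analyticAt.eventually_nhds,
    nhdsWithin_le_nhds hH, self_mem_nhdsWithin] with z hcz hHz hz
  have hc' := hcz.self_of_nhds
  have hdg : deriv (fun z => a * z ^ 2 + z ^ 4 * c z) =ᶠ[𝓝 z]
      fun w => 2 * a * w + 4 * w ^ 3 * c w + w ^ 4 * deriv c w :=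
    hcz.mono fun w hw => (hg' w hw).deriv
  have hg'' := (((hasDerivAt_id' z).const_mul (2 * a)).fun_add
    (((hasDerivAt_pow 3 z).const_mul 4).fun_mul hc'.differentiableAt.hasDerivAt)).fun_add
    ((hasDerivAt_pow 4 z).fun_mul hc'.deriv.differentiableAt.hasDerivAt)
  have hμ' := (((hc'.differentiableAt.hasDerivAt.const_mul 2).fun_add
    ((hasDerivAt_id' z).fun_mul hc'.deriv.differentiableAt.hasDerivAt)).fun_div
    (((hasDerivAt_pow 2 z).fun_mul hc'.differentiableAt.hasDerivAt).const_add a) hHz)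
  have hz : z ≠ 0 := hz
  rw [miuraPotential, (hg' z hc').deriv, hdg.deriv_eq, hg''.deriv, hμ'.deriv]
  field_simp
  ring

end MiuraPotential

/-- Let `g` be holomorphic near `0` with `g(0) = g'(0) = 0`,
`g''(0) ≠ 0` and `g'''(0) = 0` (an order-two zero closing periods).  Then the
Miura potential `u = −(3/4)(g')²/g² + (1/2) g''/g` has Laurent expansion
`u(z) = −2/z² + b + z² f₂(z)` near `0`, with `b` constant and `f₂`
holomorphic; in particular the double pole of `u` at `0` has leading
coefficient `−2`, zero residue, and vanishing coefficient of `z`. -/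
theorem miura_potential_expansion_at_order_two_zero (g : ℂ → ℂ)
    (hg : AnalyticAt ℂ g 0) (h0 : g 0 = 0) (h1 : deriv g 0 = 0)
    (h2 : deriv (deriv g) 0 ≠ 0) (h3 : deriv (deriv (deriv g)) 0 = 0) :
    ∃ (b : ℂ) (f₂ : ℂ → ℂ), AnalyticAt ℂ f₂ 0 ∧
      ∀ᶠ z in nhdsWithin 0 {(0:ℂ)}ᶜ,
        -(3 / 4) * (deriv g z) ^ 2 / (g z) ^ 2
            + (1 / 2) * deriv (deriv g) z / g z
          = -2 / z ^ 2 + b + z ^ 2 * f₂ z := by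
  obtain ⟨c, hc, hgc⟩ := hg.exists_eq_sq_smul_add_pow_four_smul h0 h1 h3
  set a := deriv (deriv g) 0 / 2
  have ha : a ≠ 0 := div_ne_zero h2 two_ne_zero
  have hga : g = fun z => a * z ^ 2 + z ^ 4 * c z := by
    ext z
    rw [hgc z, smul_eq_mul, smul_eq_mul]
    ring
  set μ : ℂ → ℂ := fun z => (2 * c z + z * deriv c z) / (a + z ^ 2 * c z)
  have hμ : AnalyticAt ℂ μ 0 := by
    refine AnalyticAt.div (by fun_prop) (by fun_prop) ?_
    simpa using ha
  obtain ⟨F, hF, hμF⟩ := hμ.exists_sub_smul_deriv_eq_add_sq_smul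
  refine ⟨-μ 0 / 2, fun z => -F z / 2 - μ z ^ 2 / 4, by fun_prop, ?_⟩
  filter_upwards [miuraPotential_mul_sq_add_pow_four_mul_eq ha hc rfl] with z hz
  rw [hga]
  change miuraPotential _ z = _
  rw [hz]
  linear_combination (-1 / 2 : ℂ) * hμF z
end

section
/- Let u be meromorphic near z₀ ∈ ℂ and let y be meromorphic near z₀ with a pole of order k ≥ 1 at z₀, satisfying y'' + u·y = 0 where both sides are defined. Then u has a pole of order exactly two at z₀ and its Laurent expansion is u(z) = −k(k+1)/(z−z₀)² + (2k·f'(z₀)/f(z₀))·(z−z₀)^{−1} + holomorphic terms, where y(z) = (z−z₀)^{−k}·f(z) with f holomorphic and f(z₀) ≠ 0. In particular, if additionally u(z) = −2/(z−z₀)² + holomorphic(z) near z₀, then k = 1, i.e., every pole of y is simple. -/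
open Filter Topology

/-!
Writing `y = f / (z - z₀)^k`, the Leibniz rule gives
`y'' (z - z₀)^k = f'' - 2k f' / (z - z₀) + k(k+1) f / (z - z₀)^2`, so near `z₀`
`u = -y''/y = -k(k+1)/(z - z₀)^2 + 2k (f'/f)/(z - z₀) - f''/f`.
Since `f'/f` is holomorphic at `z₀`, expanding it to first order yields the Laurent expansion.
The coefficient of `(z - z₀)^(-2)` is the limit of `(z - z₀)^2 u`, hence unique; comparing it
with `-2` gives `k(k+1) = 2`, i.e. `k = 1`.
-/

variable {𝕜 : Type*} [NontriviallyNormedField 𝕜]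

theorem AnalyticAt.dslope {E : Type*} [NormedAddCommGroup E] [NormedSpace 𝕜 E] {f : 𝕜 → E}
    {z₀ : 𝕜} (hf : AnalyticAt 𝕜 f z₀) : AnalyticAt 𝕜 (dslope f z₀) z₀ :=
  let ⟨_, hp⟩ := hf
  hp.has_fpower_series_dslope_fslope.analyticAt

section PoleDerivatives

variable {f : 𝕜 → 𝕜} {f' z z₀ : 𝕜}

theorem HasDerivAt.div_sub_pow (hf : HasDerivAt f f' z) (hz : z ≠ z₀) (k : ℕ) :
    HasDerivAt (fun w => f w / (w - z₀) ^ k)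
      (f' / (z - z₀) ^ k - k * f z / (z - z₀) ^ (k + 1)) z := by
  have hz' : z - z₀ ≠ 0 := sub_ne_zero.2 hz
  have hpow : HasDerivAt (fun w => (w - z₀) ^ k) (k * (z - z₀) ^ (k - 1)) z := by
    simpa using ((hasDerivAt_id z).sub_const z₀).fun_pow k
  refine (hf.fun_div hpow (pow_ne_zero _ hz')).congr_deriv ?_
  rcases k with _ | k
  · simp
  · rw [Nat.add_sub_cancel]
    field_simp
    ring

theorem deriv_deriv_div_sub_pow [CompleteSpace 𝕜] (hf : AnalyticAt 𝕜 f z) (hz : z ≠ z₀)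
    (k : ℕ) :
    deriv (deriv fun w => f w / (w - z₀) ^ k) z =
      deriv (deriv f) z / (z - z₀) ^ k - 2 * k * deriv f z / (z - z₀) ^ (k + 1)
        + k * (k + 1) * f z / (z - z₀) ^ (k + 2) := by
  have hderiv : deriv (fun w => f w / (w - z₀) ^ k) =ᶠ[𝓝 z]
      fun w => deriv f w / (w - z₀) ^ k - k * (f w / (w - z₀) ^ (k + 1)) := by
    filter_upwards [hf.eventually_analyticAt, eventually_ne_nhds hz] with w hw hwz
    rw [(hw.differentiableAt.hasDerivAt.div_sub_pow hwz k).deriv, mul_div_assoc]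
  rw [hderiv.deriv_eq, ((hf.deriv.differentiableAt.hasDerivAt.div_sub_pow hz k).fun_sub
    ((hf.differentiableAt.hasDerivAt.div_sub_pow hz (k + 1)).const_mul (k : 𝕜))).deriv]
  push_cast
  ring

end PoleDerivatives

section Laurent

variable {z₀ : 𝕜}

theorem tendsto_sub_sq_mul_laurent (a b : 𝕜) {h : 𝕜 → 𝕜} (hh : ContinuousAt h z₀) :
    Tendsto (fun z => (z - z₀) ^ 2 * (a / (z - z₀) ^ 2 + b / (z - z₀) + h z)) (𝓝[≠] z₀)
      (𝓝 a) := by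
  have hcont : ContinuousAt (fun z => a + (z - z₀) * b + (z - z₀) ^ 2 * h z) z₀ := by
    fun_prop
  have hlim : Tendsto (fun z => a + (z - z₀) * b + (z - z₀) ^ 2 * h z) (𝓝[≠] z₀) (𝓝 a) := by
    simpa using hcont.tendsto.mono_left nhdsWithin_le_nhds
  refine hlim.congr' ?_
  filter_upwards [self_mem_nhdsWithin] with z hz
  have hz' : z - z₀ ≠ 0 := sub_ne_zero.2 hz
  field_simp

theorem eq_of_eventuallyEq_laurent {a b a' b' : 𝕜} {h h' : 𝕜 → 𝕜} (hh : ContinuousAt h z₀)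
    (hh' : ContinuousAt h' z₀)
    (heq : ∀ᶠ z in 𝓝[≠] z₀,
      a / (z - z₀) ^ 2 + b / (z - z₀) + h z = a' / (z - z₀) ^ 2 + b' / (z - z₀) + h' z) :
    a = a' :=
  tendsto_nhds_unique ((tendsto_sub_sq_mul_laurent a b hh).congr' (heq.mono fun z hz => by
    rw [hz])) (tendsto_sub_sq_mul_laurent a' b' hh')

end Laurent

theorem potential_eq_of_schrodinger [CompleteSpace 𝕜] {u f : 𝕜 → 𝕜} {z₀ : 𝕜} {k : ℕ}
    (hf : AnalyticAt 𝕜 f z₀) (hfnz : f z₀ ≠ 0)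
    (hschr : ∀ᶠ z in 𝓝[≠] z₀,
      deriv (deriv fun w => f w / (w - z₀) ^ k) z + u z * (f z / (z - z₀) ^ k) = 0) :
    ∀ᶠ z in 𝓝[≠] z₀, u z = -(k * (k + 1) : 𝕜) / (z - z₀) ^ 2
      + 2 * k * (deriv f z / f z) / (z - z₀) - deriv (deriv f) z / f z := by
  filter_upwards [hschr, nhdsWithin_le_nhds hf.eventually_analyticAt,
    nhdsWithin_le_nhds (hf.continuousAt.eventually_ne hfnz), self_mem_nhdsWithin]
    with z hz hfz hfz0 hne
  have hne' : z - z₀ ≠ 0 := sub_ne_zero.2 hne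
  rw [deriv_deriv_div_sub_pow hfz hne k] at hz
  simp only [pow_add, pow_one] at hz
  have hpow : (z - z₀) ^ k ≠ 0 := pow_ne_zero _ hne'
  generalize (z - z₀) ^ k = p at hz hpow
  field_simp at hz ⊢
  linear_combination hz

theorem schrodinger_pole_order_general (u f : ℂ → ℂ) (z₀ : ℂ) (k : ℕ)
    (hf : AnalyticAt ℂ f z₀) (hfnz : f z₀ ≠ 0)
    (hschr : ∀ᶠ z in nhdsWithin z₀ {z₀}ᶜ,
      deriv (deriv (fun w => f w / (w - z₀) ^ k)) z
        + u z * (f z / (z - z₀) ^ k) = 0) :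
    (∃ h : ℂ → ℂ, AnalyticAt ℂ h z₀ ∧
      ∀ᶠ z in nhdsWithin z₀ {z₀}ᶜ,
        u z = -(k * (k + 1) : ℂ) / (z - z₀) ^ 2
          + (2 * k * deriv f z₀ / f z₀) / (z - z₀) + h z) ∧
    ((∃ h₀ : ℂ → ℂ, AnalyticAt ℂ h₀ z₀ ∧
        ∀ᶠ z in nhdsWithin z₀ {z₀}ᶜ, u z = -2 / (z - z₀) ^ 2 + h₀ z) →
      k = 1) := by
  set φ : ℂ → ℂ := fun z => deriv f z / f z
  set h : ℂ → ℂ := fun z => 2 * k * dslope φ z₀ z - deriv (deriv f) z / f z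
  have hh : AnalyticAt ℂ h z₀ :=
    (analyticAt_const.mul (hf.deriv.div hf hfnz).dslope).sub (hf.deriv.deriv.div hf hfnz)
  have hlaurent : ∀ᶠ z in 𝓝[≠] z₀, u z = -(k * (k + 1) : ℂ) / (z - z₀) ^ 2
      + (2 * k * deriv f z₀ / f z₀) / (z - z₀) + h z := by
    filter_upwards [potential_eq_of_schrodinger hf hfnz hschr, self_mem_nhdsWithin]
      with z hz hne
    have hne' : z - z₀ ≠ 0 := sub_ne_zero.2 hne
    have hφz : deriv f z / f z = deriv f z₀ / f z₀ + (z - z₀) * dslope φ z₀ z :=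
      eq_add_of_sub_eq' (sub_smul_dslope φ z₀ z).symm
    rw [hz, hφz]
    field_simp
    ring
  refine ⟨⟨h, hh, hlaurent⟩, ?_⟩
  rintro ⟨h₀, hh₀, hu₀⟩
  have hcoeff := eq_of_eventuallyEq_laurent (a' := -2) (b' := 0) hh.continuousAt hh₀.continuousAt
    (by filter_upwards [hlaurent, hu₀] with z h1 h2; rw [← h1, h2, zero_div, add_zero])
  have hk : k * (k + 1) = 2 := by exact_mod_cast neg_inj.1 hcoeff
  nlinarith

/-- If `y(z) = f(z)/(z−z₀)^k` has a pole of order `k ≥ 1` at `z₀`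
(`f` holomorphic, `f(z₀) ≠ 0`) and `y'' + u y = 0` holds on a punctured
neighborhood of `z₀`, then `u` has a double pole at `z₀` with Laurent
expansion `u(z) = −k(k+1)/(z−z₀)² + (2k f'(z₀)/f(z₀))/(z−z₀) + holomorphic`.
Moreover, if in addition `u(z) = −2/(z−z₀)² + holomorphic` near `z₀`, then
`k = 1`, i.e. the pole of `y` is simple. -/
theorem schrodinger_pole_order (u f : ℂ → ℂ) (z₀ : ℂ) (k : ℕ) (hk : 1 ≤ k)
    (hf : AnalyticAt ℂ f z₀) (hfnz : f z₀ ≠ 0)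
    (hschr : ∀ᶠ z in nhdsWithin z₀ {z₀}ᶜ,
      deriv (deriv (fun w => f w / (w - z₀) ^ k)) z
        + u z * (f z / (z - z₀) ^ k) = 0) :
    (∃ h : ℂ → ℂ, AnalyticAt ℂ h z₀ ∧
      ∀ᶠ z in nhdsWithin z₀ {z₀}ᶜ,
        u z = -(k * (k + 1) : ℂ) / (z - z₀) ^ 2
          + (2 * k * deriv f z₀ / f z₀) / (z - z₀) + h z) ∧
    ((∃ h₀ : ℂ → ℂ, AnalyticAt ℂ h₀ z₀ ∧
        ∀ᶠ z in nhdsWithin z₀ {z₀}ᶜ, u z = -2 / (z - z₀) ^ 2 + h₀ z) →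
      k = 1) :=
  schrodinger_pole_order_general u f z₀ k hf hfnz hschr
end

section
/- Let U ⊆ ℂ be a connected open set, let g : U → ℂ be holomorphic and non-constant, and let f₁, f₂ : U → ℂ be holomorphic functions such that f₁(z) + conj(g(z))·f₂(z) = 0 for all z ∈ U. Then f₁ ≡ 0 and f₂ ≡ 0 on U. -/
/-!
If `f₂ w ≠ 0`, then near `w` we have `conj ∘ g = -f₁ / f₂`, so both `g` and `conj ∘ g` are
holomorphic there. Comparing the real derivatives of `conj ∘ g` in the directions `1` and `I`
forces `g' = 0` near `w`, and by the identity theorem `g` is then constant on all of `U`.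
Hence `f₂ ≡ 0`, and the relation gives `f₁ ≡ 0`.
-/

open Complex ComplexConjugate Filter Topology Set

theorem deriv_eq_zero_of_differentiableAt_conj {h : ℂ → ℂ} {z : ℂ}
    (hh : DifferentiableAt ℂ h z) (hc : DifferentiableAt ℂ (fun w => conj (h w)) z) :
    deriv h z = 0 := by
  have hconj := conjCLE.toContinuousLinearMap.hasFDerivAt.comp z
    (hh.hasDerivAt.hasFDerivAt.restrictScalars ℝ)
  have hL := hconj.unique (hc.hasDerivAt.hasFDerivAt.restrictScalars ℝ)
  have h1 := congr($hL 1)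
  have hI := congr($hL I)
  simp only [ContinuousLinearMap.comp_apply, ContinuousLinearMap.coe_restrictScalars',
    ContinuousLinearMap.toSpanSingleton_apply, smul_eq_mul, one_mul, ContinuousLinearEquiv.coe_coe,
    ContinuousAlgEquiv.coeCLE_apply, conjCAE_apply, map_mul, conj_I, neg_mul] at h1 hI
  rw [← h1] at hI
  have hI' : I * conj (deriv h z) = 0 := by linear_combination (-1 / 2 : ℂ) * hI
  simpa [I_ne_zero] using hI'

theorem deriv_eq_zero_of_add_conj_mul_eq_zero {g f₁ f₂ : ℂ → ℂ} {z : ℂ}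
    (hg : DifferentiableAt ℂ g z) (hf₁ : DifferentiableAt ℂ f₁ z) (hf₂ : DifferentiableAt ℂ f₂ z)
    (hz : f₂ z ≠ 0) (hrel : ∀ᶠ w in 𝓝 z, f₁ w + conj (g w) * f₂ w = 0) :
    deriv g z = 0 := by
  refine deriv_eq_zero_of_differentiableAt_conj hg ((hf₁.neg.div hf₂ hz).congr_of_eventuallyEq ?_)
  filter_upwards [hrel, hf₂.continuousAt.eventually_ne hz] with w hw hw₂
  rw [Pi.div_apply, Pi.neg_apply, eq_div_iff hw₂]
  linear_combination hw

theorem IsOpen.exists_eqOn_const_of_deriv_eventuallyEq_zero {g : ℂ → ℂ} {U : Set ℂ}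
    (hU : IsOpen U) (hUc : IsPreconnected U) (hg : DifferentiableOn ℂ g U) {w : ℂ} (hw : w ∈ U)
    (hderiv : deriv g =ᶠ[𝓝 w] 0) : ∃ c, EqOn g (fun _ => c) U :=
  hU.exists_is_const_of_deriv_eq_zero hUc hg <|
    (hg.analyticOnNhd hU).deriv.eqOn_zero_of_preconnected_of_eventuallyEq_zero hUc hw hderiv

/-- On a connected open set `U ⊆ ℂ`, if `g` is holomorphic and
non-constant and `f₁, f₂` are holomorphic with `f₁(z) + conj(g(z)) f₂(z) = 0`
on `U`, then `f₁ ≡ 0` and `f₂ ≡ 0` on `U`. -/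
theorem holomorphic_antiholomorphic_splitting (U : Set ℂ) (hU : IsOpen U)
    (hUconn : IsConnected U) (g f₁ f₂ : ℂ → ℂ)
    (hg : DifferentiableOn ℂ g U)
    (hgnc : ∀ c : ℂ, ¬ Set.EqOn g (fun _ => c) U)
    (hf₁ : DifferentiableOn ℂ f₁ U) (hf₂ : DifferentiableOn ℂ f₂ U)
    (hrel : ∀ z ∈ U, f₁ z + (starRingEnd ℂ) (g z) * f₂ z = 0) :
    ∀ z ∈ U, f₁ z = 0 ∧ f₂ z = 0 := by
  have hf₂_zero : ∀ z ∈ U, f₂ z = 0 := by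
    by_contra! ⟨w, hw, hw₂⟩
    have hderiv : deriv g =ᶠ[𝓝 w] 0 := by
      filter_upwards [hU.mem_nhds hw,
        (hf₂.continuousOn.continuousAt (hU.mem_nhds hw)).eventually_ne hw₂] with z hz hz₂
      have hzU := hU.mem_nhds hz
      exact deriv_eq_zero_of_add_conj_mul_eq_zero (hg.differentiableAt hzU)
        (hf₁.differentiableAt hzU) (hf₂.differentiableAt hzU) hz₂ (eventually_of_mem hzU hrel)
    obtain ⟨c, hc⟩ :=
      hU.exists_eqOn_const_of_deriv_eventuallyEq_zero hUconn.isPreconnected hg hw hderiv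
    exact hgnc c hc
  exact fun z hz => ⟨by simpa [hf₂_zero z hz] using hrel z hz, hf₂_zero z hz⟩
end
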